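/- Let R be a finite ring. Then the category OVI(R) is quasi-Gröbner; in particular, for every noetherian commutative ring k, the category of OVI(R)-modules over k is locally noetherian. -/

import Mathlib

open CategoryTheory

universe u

/-- The (skeletal model of the) category `OI` of finite totally ordered sets and
order-preserving injections: the object `n` represents `[n] = {1, …, n}`, and a
morphism `n ⟶ m` is an order-preserving injection `Fin n ↪o Fin m`. -/
def OI : Type := ℕ

namespace OI

/-- Build an object of `OI` from a natural number. -/
def mk (n : ℕ) : OI := n

/-- The underlying natural number of an object of `OI`. -/
def len (n : OI) : ℕ := n

instance : Category OI where
  Hom n m := Fin n.len ↪o Fin m.len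
  id _ := RelEmbedding.refl _
  comp f g := f.trans g
  id_comp _ := rfl
  comp_id _ := rfl
  assoc _ _ _ := rfl

/-- The order embedding underlying a morphism of `OI`. -/
def emb {n m : OI} (f : n ⟶ m) : Fin n.len ↪o Fin m.len := f

@[ext]
theorem hom_ext {n m : OI} (f g : n ⟶ m) (h : ∀ i, emb f i = emb g i) : f = g :=
  RelEmbedding.ext h

end OI

/-- A module over a category `C` (a functor `C ⥤ Mod_k`) is finitely generated if there
are finitely many elements `mᵢ ∈ M xᵢ` whose images under all morphisms span every `M y`;
equivalently, `M` is a quotient of a finite direct sum of principal projectives. -/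
def CatModule.FG {C : Type*} [Category C] {k : Type u} [CommRing k]
    (M : C ⥤ ModuleCat.{u} k) : Prop :=
  ∃ (r : ℕ) (x : Fin r → C) (m : ∀ i, M.obj (x i)),
    ∀ y : C, Submodule.span k
      {v : M.obj y | ∃ (i : Fin r) (f : x i ⟶ y), M.map f (m i) = v} = ⊤

section OVIDef

variable {R : Type u} [Ring R]

theorem linearMap_apply_eq_sum {n m : ℕ} (ψ : (Fin n → R) →ₗ[R] (Fin m → R))
    (w : Fin n → R) (s : Fin m) :
    ψ w s = ∑ r : Fin n, w r * ψ (Pi.single r 1) s := by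
  have hw : w = ∑ r : Fin n, (w r) • (Pi.single r (1 : R) : Fin n → R) := by
    funext x
    simp [Finset.sum_apply, Pi.single_apply, mul_ite]
  conv_lhs => rw [hw]
  rw [map_sum]
  simp [Finset.sum_apply, smul_eq_mul]

/-- A linear map between ordered free `R`-modules is a morphism of `OVI(R)` if there is
an order-preserving injection `f₀` of the index sets such that the `i`-th basis vector is
sent to the `f₀(i)`-th basis vector plus lower order terms. -/
def IsOVIHom {n m : ℕ} (φ : (Fin n → R) →ₗ[R] (Fin m → R)) : Prop :=
  ∃ f : Fin n ↪o Fin m, ∀ i : Fin n,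
    φ (Pi.single i 1) (f i) = 1 ∧ ∀ r : Fin m, f i < r → φ (Pi.single i 1) r = 0

theorem isOVIHom_id (n : ℕ) : IsOVIHom (LinearMap.id : (Fin n → R) →ₗ[R] (Fin n → R)) := by
  refine ⟨RelEmbedding.refl _, fun i => ⟨Pi.single_eq_same i 1, fun r hr => ?_⟩⟩
  exact Pi.single_eq_of_ne hr.ne' 1

theorem isOVIHom_comp {n m p : ℕ} {φ : (Fin n → R) →ₗ[R] (Fin m → R)}
    {ψ : (Fin m → R) →ₗ[R] (Fin p → R)} (hφ : IsOVIHom φ) (hψ : IsOVIHom ψ) :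
    IsOVIHom (ψ ∘ₗ φ) := by
  obtain ⟨f, hf⟩ := hφ
  obtain ⟨g, hg⟩ := hψ
  refine ⟨f.trans g, fun i => ?_⟩
  have key : ∀ s : Fin p, (ψ ∘ₗ φ) (Pi.single i 1) s
      = ∑ r : Fin m, φ (Pi.single i 1) r * ψ (Pi.single r 1) s := fun s =>
    linearMap_apply_eq_sum ψ (φ (Pi.single i 1)) s
  constructor
  · have h1 : ∀ r : Fin m, r ∈ Finset.univ → r ≠ f i →
        φ (Pi.single i 1) r * ψ (Pi.single r 1) (g (f i)) = 0 := by
      intro r _ hr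
      rcases lt_or_gt_of_ne hr with h | h
      · have h2 : ψ (Pi.single r 1) (g (f i)) = 0 := (hg r).2 _ (g.strictMono h)
        rw [h2, mul_zero]
      · have h2 : φ (Pi.single i 1) r = 0 := (hf i).2 r h
        rw [h2, zero_mul]
    have h3 : ∑ r : Fin m, φ (Pi.single i 1) r * ψ (Pi.single r 1) (g (f i)) = 1 := by
      rw [Finset.sum_eq_single (f i) (fun r hmem hr => h1 r hmem hr) (by simp),
        (hf i).1, (hg (f i)).1, one_mul]
    exact (key (g (f i))).trans h3
  · intro s hs
    have h0 : ∑ r : Fin m, φ (Pi.single i 1) r * ψ (Pi.single r 1) s = 0 := by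
      apply Finset.sum_eq_zero
      intro r _
      rcases le_or_gt r (f i) with h | h
      · have h2 : ψ (Pi.single r 1) s = 0 := (hg r).2 s (lt_of_le_of_lt (g.monotone h) hs)
        rw [h2, mul_zero]
      · have h2 : φ (Pi.single i 1) r = 0 := (hf i).2 r h
        rw [h2, zero_mul]
    exact (key s).trans h0

end OVIDef

/-- The (skeletal model of the) category `OVI(R)` of finite rank free left `R`-modules
with a totally ordered basis: the object `n` represents `R^n` with its standard ordered
basis, and morphisms are the `R`-linear maps that send each basis vector to a basis
vector plus lower order terms (for an order-preserving injection of the index sets). -/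
def OVI (R : Type u) [Ring R] : Type := ℕ

namespace OVI

variable {R : Type u} [Ring R]

/-- Build an object of `OVI R` from a natural number. -/
def mk (R : Type u) [Ring R] (n : ℕ) : OVI R := n

/-- The rank of an object of `OVI R`. -/
def len (n : OVI R) : ℕ := n

instance : Category (OVI R) where
  Hom n m := { φ : (Fin n.len → R) →ₗ[R] (Fin m.len → R) // IsOVIHom φ }
  id n := ⟨LinearMap.id, isOVIHom_id n.len⟩
  comp φ ψ := ⟨ψ.1 ∘ₗ φ.1, isOVIHom_comp φ.2 ψ.2⟩
  id_comp _ := Subtype.ext (LinearMap.comp_id _)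
  comp_id _ := Subtype.ext (LinearMap.id_comp _)
  assoc _ _ _ := Subtype.ext (LinearMap.comp_assoc _ _ _).symm

/-- The linear map underlying a morphism of `OVI R`. -/
def toLinear {n m : OVI R} (φ : n ⟶ m) : (Fin n.len → R) →ₗ[R] (Fin m.len → R) :=
  (φ : { φ : (Fin n.len → R) →ₗ[R] (Fin m.len → R) // IsOVIHom φ }).1

end OVI

/-- The category of `OVI(R)`-modules over `k` is locally noetherian: every submodule of
a finitely generated `OVI(R)`-module is finitely generated. -/
def OVIModulesLocallyNoetherian (R : Type u) [Ring R] (k : Type u) [CommRing k] : Prop :=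
  ∀ (M N : OVI R ⥤ ModuleCat.{u} k) (ι : N ⟶ M), CategoryTheory.Mono ι →
    CatModule.FG M → CatModule.FG N

section Grobner

open CategoryTheory

variable (C : Type v) [Category.{w} C]

/-- A functor `Φ : C ⥤ D` satisfies property (F) if for every `y : D` there are finitely
many objects `x₁, …, xₙ : C` and morphisms `fᵢ : y ⟶ Φ xᵢ` such that every morphism
`f : y ⟶ Φ x` factors as `f = fᵢ ≫ Φ g` for some `i` and some `g : xᵢ ⟶ x`. -/
def PropertyF {C : Type v} [Category.{w} C] {D : Type v'} [Category.{w'} D]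
    (Φ : C ⥤ D) : Prop :=
  ∀ y : D, ∃ (n : ℕ) (x : Fin n → C) (t : ∀ i, y ⟶ Φ.obj (x i)),
    ∀ (z : C) (f : y ⟶ Φ.obj z), ∃ (i : Fin n) (g : x i ⟶ z), f = t i ≫ Φ.map g

/-- A category `C` is Gröbner: it is essentially small (with a family of isomorphism
class representatives `obj : I → C`), and for every object `x` the poset `|S_x|` of
morphisms out of `x` (ordered by `f ⪯ g` iff `g = f ≫ h` for some `h`) is noetherian and
admits a total ordering compatible with left composition whose restriction to each
hom-set is a well-ordering. -/
def IsGrobner : Prop :=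
  ∃ (I : Type v) (obj : I → C),
    (∀ c : C, ∃! i : I, Nonempty (obj i ≅ c)) ∧
    ∀ x : C,
      (∀ s : ℕ → Σ i : I, (x ⟶ obj i), ∃ a b : ℕ, a < b ∧
        ∃ h : obj (s a).1 ⟶ obj (s b).1, (s b).2 = (s a).2 ≫ h) ∧
      (∃ r : (Σ i : I, (x ⟶ obj i)) → (Σ i : I, (x ⟶ obj i)) → Prop,
        IsLinearOrder _ r ∧
        (∀ (i j : I) (f g : x ⟶ obj i) (h : obj i ⟶ obj j),
          r ⟨i, f⟩ ⟨i, g⟩ → r ⟨j, f ≫ h⟩ ⟨j, g ≫ h⟩) ∧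
        ∀ i : I, WellFounded (fun f g : x ⟶ obj i => r ⟨i, f⟩ ⟨i, g⟩ ∧ f ≠ g))

/-- A category is quasi-Gröbner if it admits an essentially surjective functor
satisfying property (F) from a Gröbner category. -/
def IsQuasiGrobner : Prop :=
  ∃ (C' : Cat.{w, v}) (F : C' ⥤ C), IsGrobner C' ∧ F.EssSurj ∧ PropertyF F

end Grobner

/-!
Let `OM R` be the category with the same objects as `OVI(R)` whose morphisms `n ⟶ m` are pairs
of an order embedding `f` and an `n × m` matrix in reduced echelon form with pivots at `f`.
Every `OVI(R)`-morphism is a unitriangular automorphism followed by the image of such a pair,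
so the forgetful functor `OM R ⥤ OVI R` has property (F) when `R` is finite.

`OM R` is Gröbner. Composing with a reduced matrix copies each column to a pivot column and only
mixes it into columns further right, so comparing matrices column by column from the last one is
compatible with composition. For finite `R`, a morphism out of `x` is a word over the finite
alphabet of (pivot label, column) pairs, and if the word of `φ` is a subword of that of `ψ` then
`ψ` factors through `φ`; Higman's lemma therefore makes `|S_x|` noetherian.

Local noetherianity then follows by the leading-term argument: along a subsequence that is
increasing for divisibility, the leading coefficient ideals of a strictly increasing chain of
submodules of `⊕ᵢ P_{xᵢ}` would form a non-stabilizing increasing chain of ideals of `k`.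
-/

universe v w v' w'

instance Sigma.Lex.wellFoundedLT {ι : Type*} {β : ι → Type*} [LT ι] [∀ i, LT (β i)]
    [WellFoundedLT ι] [∀ i, WellFoundedLT (β i)] : WellFoundedLT (Σₗ i, β i) := by
  refine ⟨(InvImage.wf (fun a : Σₗ i, β i => (⟨(ofLex a).1, (ofLex a).2⟩ : Σ' i, β i))
    (wellFounded_lt.psigma_lex fun _ => wellFounded_lt)).mono ?_⟩
  rintro ⟨i, a⟩ ⟨j, b⟩ hlt
  obtain hij | ⟨hij, hab⟩ := Sigma.Lex.lt_def.1 hlt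
  · exact PSigma.Lex.left _ _ hij
  · obtain rfl : i = j := hij
    exact PSigma.Lex.right _ hab

theorem List.exists_orderEmbedding_of_ofFn_sublist {α : Type*} {m m' : ℕ} {F : Fin m → α}
    {G : Fin m' → α} (h : (List.ofFn F).Sublist (List.ofFn G)) :
    ∃ g : Fin m ↪o Fin m', ∀ j, G (g j) = F j := by
  obtain ⟨g, hg⟩ := List.sublist_iff_exists_fin_orderEmbedding_get_eq.1 h
  refine ⟨((Fin.castOrderIso (List.length_ofFn (f := F)).symm).toOrderEmbedding.trans g).trans
    (Fin.castOrderIso List.length_ofFn).toOrderEmbedding, fun j => ?_⟩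
  simpa [Fin.cast] using (hg (Fin.cast (List.length_ofFn (f := F)).symm j)).symm

section UnitriangularInverse

variable {R : Type u} [Ring R]

theorem Matrix.pow_apply_eq_zero_of_lt_add {n : ℕ} {X : Matrix (Fin n) (Fin n) R}
    (hX : ∀ i j, i ≤ j → X i j = 0) (k : ℕ) :
    ∀ i j : Fin n, (i : ℕ) < j + k → (X ^ k) i j = 0 := by
  induction k with
  | zero => exact fun i j hij => Matrix.one_apply_ne (by omega)
  | succ k ih =>
    intro i j hij
    rw [pow_succ, Matrix.mul_apply]
    refine Finset.sum_eq_zero fun l _ => ?_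
    rcases Nat.lt_or_ge i (l + k) with hil | hil
    · rw [ih i l hil, zero_mul]
    · rw [hX l j (Fin.le_def.2 (by omega)), mul_zero]

/-- The inverse is `∑_{k < n} X ^ k` for the nilpotent `X = 1 - U`; no commutativity is needed. -/
theorem Matrix.exists_lowerTriangular_inv {n : ℕ} {U : Matrix (Fin n) (Fin n) R}
    (hdiag : ∀ i, U i i = 1) (hU : ∀ i j, i < j → U i j = 0) :
    ∃ W : Matrix (Fin n) (Fin n) R, W * U = 1 ∧ U * W = 1 ∧ ∀ i j, i < j → W i j = 0 := by
  set X := 1 - U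
  have hX : ∀ i j, i ≤ j → X i j = 0 := by
    intro i j hij
    rcases hij.eq_or_lt with rfl | hij
    · simp [X, hdiag]
    · simp [X, hU i j hij, Matrix.one_apply_ne hij.ne]
  have hXn : X ^ n = 0 := by
    ext i j
    exact Matrix.pow_apply_eq_zero_of_lt_add hX n i j (by omega)
  have hU' : U = -(X - 1) := by simp [X]
  refine ⟨∑ k ∈ Finset.range n, X ^ k, ?_, ?_, fun i j hij => ?_⟩
  · rw [hU', mul_neg, geom_sum_mul, hXn, zero_sub, neg_neg]
  · rw [hU', neg_mul, mul_geom_sum, hXn, zero_sub, neg_neg]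
  · rw [Matrix.sum_apply]
    exact Finset.sum_eq_zero fun k _ =>
      Matrix.pow_apply_eq_zero_of_lt_add hX k i j (by have := Fin.lt_def.1 hij; omega)

end UnitriangularInverse

section CatModule

variable {C : Type v} [Category.{w} C] {D : Type v'} [Category.{w'} D] {k : Type u} [CommRing k]

def LocallyNoetherianModules (C : Type v) [Category.{w} C] (k : Type u) [CommRing k] : Prop :=
  ∀ (M N : C ⥤ ModuleCat.{u} k) (ι : N ⟶ M), Mono ι → CatModule.FG M → CatModule.FG N

theorem CatModule.fg_of_finite {M : C ⥤ ModuleCat.{u} k} {ι : Type*} [Finite ι] (x : ι → C)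
    (m : ∀ i, M.obj (x i))
    (hspan : ∀ y : C, Submodule.span k {v | ∃ (i : ι) (f : x i ⟶ y), M.map f (m i) = v} = ⊤) :
    CatModule.FG M := by
  let e := Finite.equivFin ι
  refine ⟨Nat.card ι, fun j => x (e.symm j), fun j => m (e.symm j), fun y => ?_⟩
  simpa only [e.symm.surjective.exists] using hspan y

theorem CatModule.FG.comp_of_propertyF {Φ : C ⥤ D} (hΦ : PropertyF Φ) {M : D ⥤ ModuleCat.{u} k}
    (hM : CatModule.FG M) : CatModule.FG (Φ ⋙ M) := by
  obtain ⟨r, x, m, hspan⟩ := hM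
  choose n x' t ht using fun i => hΦ (x i)
  refine CatModule.fg_of_finite (fun p : Σ i, Fin (n i) => x' p.1 p.2)
    (fun p => M.map (t p.1 p.2) (m p.1)) fun y => eq_top_iff.2 ?_
  rw [← hspan (Φ.obj y), Submodule.span_le]
  rintro _ ⟨i, f, rfl⟩
  obtain ⟨l, g, rfl⟩ := ht i y f
  exact Submodule.subset_span ⟨⟨i, l⟩, g, by simp⟩

theorem CatModule.FG.of_comp_essSurj (Φ : C ⥤ D) [Φ.EssSurj] {N : D ⥤ ModuleCat.{u} k}
    (hN : CatModule.FG (Φ ⋙ N)) : CatModule.FG N := by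
  obtain ⟨r, x, m, hspan⟩ := hN
  refine ⟨r, fun i => Φ.obj (x i), m, fun y => eq_top_iff.2 fun v _ => ?_⟩
  let e := Φ.objObjPreimageIso y
  have hv := (hspan (Φ.objPreimage y)).ge (Submodule.mem_top (x := N.map e.inv v))
  have := Submodule.mem_map_of_mem (f := (N.map e.hom).hom) hv
  rw [Submodule.map_span, ← ModuleCat.comp_apply, ← N.map_comp, e.inv_hom_id, N.map_id] at this
  refine Submodule.span_mono ?_ this
  rintro _ ⟨_, ⟨i, f, rfl⟩, rfl⟩
  exact ⟨i, Φ.map f ≫ e.hom, by simp⟩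

theorem LocallyNoetherianModules.of_propertyF (Φ : C ⥤ D) [Φ.EssSurj] (hΦ : PropertyF Φ)
    (hC : LocallyNoetherianModules C k) : LocallyNoetherianModules D k := by
  intro M N ι hι hM
  have : Mono (Φ.whiskerLeft ι) := (NatTrans.mono_iff_mono_app _).2 fun c =>
    (NatTrans.mono_iff_mono_app ι).1 hι (Φ.obj c)
  exact (hC _ _ (Φ.whiskerLeft ι) this (hM.comp_of_propertyF hΦ)).of_comp_essSurj Φ

end CatModule

section HomOrder

variable {C : Type v} [Category.{w} C]

def HomOrderCompatible (C : Type v) [Category.{w} C] [∀ x y : C, LinearOrder (x ⟶ y)] : Prop :=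
  ∀ ⦃x y z : C⦄ (h : y ⟶ z), StrictMono fun f : x ⟶ y => f ≫ h

/-- The posets `|S_x|` of morphisms out of `x` (with `f ⪯ g` iff `g = f ≫ h`) are noetherian. -/
def MorphismsWellQuasiOrdered (C : Type v) [Category.{w} C] : Prop :=
  ∀ x : C, (Set.univ : Set (Σ y : C, (x ⟶ y))).PartiallyWellOrderedOn
    fun f g => ∃ h : f.1 ⟶ g.1, g.2 = f.2 ≫ h

variable [∀ x y : C, LinearOrder (x ⟶ y)] [∀ x y : C, WellFoundedLT (x ⟶ y)]

theorem isGrobner_of_skeletal (hskel : Skeletal C) (hC : HomOrderCompatible C)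
    (hW : MorphismsWellQuasiOrdered C) : IsGrobner C := by
  let : LinearOrder C := IsWellOrder.linearOrder WellOrderingRel
  refine ⟨C, id, fun c => ⟨c, ⟨Iso.refl c⟩, fun d ⟨e⟩ => hskel ⟨e⟩⟩, fun x =>
    ⟨fun s => (hW x).exists_lt fun _ => Set.mem_univ _, fun p q => toLex p ≤ toLex q,
      inferInstanceAs (IsLinearOrder (Σₗ y : C, (x ⟶ y)) (· ≤ ·)), ?_, fun y => ?_⟩⟩
  · intro y z f g h hfg
    obtain hlt | ⟨_, hle⟩ := Sigma.Lex.le_def.1 hfg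
    · exact absurd hlt (lt_irrefl y)
    · exact Sigma.Lex.le_def.2 (.inr ⟨rfl, (hC h).monotone hle⟩)
  · refine (wellFounded_lt (α := x ⟶ y)).mono fun f g ⟨hfg, hne⟩ => ?_
    obtain hlt | ⟨_, hle⟩ := Sigma.Lex.le_def.1 hfg
    · exact absurd hlt (lt_irrefl y)
    · exact lt_of_le_of_ne hle hne

end HomOrder

namespace GrobnerBasis

section

variable {C : Type v} [Category.{w} C] {r : ℕ} (x : Fin r → C)

/-- The basis of the free module `⊕ᵢ k[Hom(xᵢ, z)]`, ordered lexicographically. -/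
abbrev FreeBasis (z : C) : Type w := Σₗ i : Fin r, (x i ⟶ z)

def FreeBasis.map {z z' : C} (h : z ⟶ z') (σ : FreeBasis x z) : FreeBasis x z' :=
  toLex ⟨(ofLex σ).1, (ofLex σ).2 ≫ h⟩

theorem FreeBasis.map_id (z : C) : FreeBasis.map x (𝟙 z) = id :=
  funext fun _ => by simp [FreeBasis.map]

theorem FreeBasis.map_comp {z z' z'' : C} (h : z ⟶ z') (h' : z' ⟶ z'') :
    FreeBasis.map x (h ≫ h') = FreeBasis.map x h' ∘ FreeBasis.map x h :=
  funext fun _ => by simp [FreeBasis.map]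

variable (k : Type u) [CommRing k]

noncomputable def freeMap {z z' : C} (h : z ⟶ z') :
    (FreeBasis x z →₀ k) →ₗ[k] (FreeBasis x z' →₀ k) :=
  Finsupp.lmapDomain k k (FreeBasis.map x h)

theorem freeMap_id (z : C) (w : FreeBasis x z →₀ k) : freeMap x k (𝟙 z) w = w := by
  simp [freeMap, FreeBasis.map_id]

theorem freeMap_comp {z z' z'' : C} (h : z ⟶ z') (h' : z' ⟶ z'') (w : FreeBasis x z →₀ k) :
    freeMap x k (h ≫ h') w = freeMap x k h' (freeMap x k h w) := by
  simp [freeMap, FreeBasis.map_comp, Finsupp.mapDomain_comp]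

/-- A submodule of the free `C`-module `⊕ᵢ P_{xᵢ}`, given by its values. -/
def IsStable (P : ∀ z : C, Submodule k (FreeBasis x z →₀ k)) : Prop :=
  ∀ ⦃z z' : C⦄ (h : z ⟶ z'), ∀ w ∈ P z, freeMap x k h w ∈ P z'

variable [∀ x y : C, LinearOrder (x ⟶ y)]

theorem FreeBasis.map_strictMono (hC : HomOrderCompatible C) {z z' : C} (h : z ⟶ z') :
    StrictMono (FreeBasis.map x h) := by
  rintro ⟨i, f⟩ ⟨j, g⟩ hfg
  obtain hij | ⟨hij, hfg⟩ := Sigma.Lex.lt_def.1 hfg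
  · exact Sigma.Lex.lt_def.2 (.inl hij)
  · obtain rfl : i = j := hij
    exact Sigma.Lex.lt_def.2 (.inr ⟨rfl, hC h hfg⟩)

noncomputable def leadIdeal (P : ∀ z : C, Submodule k (FreeBasis x z →₀ k)) (z : C)
    (σ : FreeBasis x z) : Ideal k :=
  (P z ⊓ Finsupp.supported k k (Set.Iic σ)).map (Finsupp.lapply σ)

variable {x k}

theorem leadIdeal_mono_of_map (hC : HomOrderCompatible C)
    {P Q : ∀ z : C, Submodule k (FreeBasis x z →₀ k)} (hPQ : P ≤ Q) (hQ : IsStable x k Q)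
    {z z' : C} (h : z ⟶ z') (σ : FreeBasis x z) :
    leadIdeal x k P z σ ≤ leadIdeal x k Q z' (FreeBasis.map x h σ) := by
  classical
  rintro _ ⟨w, ⟨hwP, hwσ⟩, rfl⟩
  have hmono := FreeBasis.map_strictMono x hC h
  refine ⟨freeMap x k h w, ⟨hQ h w (hPQ z hwP), fun τ hτ => ?_⟩,
    Finsupp.mapDomain_apply hmono.injective w σ⟩
  obtain ⟨τ', hτ', rfl⟩ := Finset.mem_image.1 (Finsupp.mapDomain_support hτ)
  exact hmono.monotone (hwσ hτ')

theorem le_of_leadIdeal_le [∀ x y : C, WellFoundedLT (x ⟶ y)]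
    {P Q : ∀ z : C, Submodule k (FreeBasis x z →₀ k)} (hPQ : P ≤ Q)
    (hJ : ∀ z σ, leadIdeal x k Q z σ ≤ leadIdeal x k P z σ) : Q ≤ P := by
  classical
  intro z
  suffices key : ∀ σ, ∀ w ∈ Q z, (w.support : Set (FreeBasis x z)) ⊆ Set.Iic σ → w ∈ P z by
    intro w hw
    obtain rfl | hw0 := eq_or_ne w 0
    · exact zero_mem _
    · exact key (w.support.max' (Finsupp.support_nonempty_iff.2 hw0)) w hw fun τ hτ =>
        Set.mem_Iic.2 (w.support.le_max' τ hτ)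
  intro σ
  induction σ using WellFoundedLT.induction with
  | ind σ ih =>
  intro w hwQ hwσ
  obtain ⟨w', ⟨hw'P, hw'σ⟩, hw'⟩ := hJ z σ ⟨w, ⟨hwQ, hwσ⟩, rfl⟩
  simp only [Finsupp.lapply_apply] at hw'
  have hlt : ∀ τ ∈ (w - w').support, τ < σ := by
    intro τ hτ
    refine lt_of_le_of_ne ?_ fun hτσ => Finsupp.mem_support_iff.1 hτ ?_
    · rcases Finset.mem_union.1 (Finsupp.support_sub hτ) with hτ | hτ
      exacts [hwσ hτ, hw'σ hτ]
    · simp [hτσ, hw']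
  rw [← sub_add_cancel w w']
  refine add_mem ?_ hw'P
  obtain h0 | hne := eq_or_ne (w - w') 0
  · rw [h0]; exact zero_mem _
  · have hsupp := Finsupp.support_nonempty_iff.2 hne
    exact ih _ (hlt _ (Finset.max'_mem _ hsupp)) _ (sub_mem hwQ (hPQ z hw'P))
      fun τ hτ => Set.mem_Iic.2 (Finset.le_max' _ τ hτ)

end

section

variable {C : Type v} [Category.{w} C] {r : ℕ} (x : Fin r → C) {k : Type u} [CommRing k]

def Divides (p q : Σ z : C, FreeBasis x z) : Prop :=
  ∃ h : p.1 ⟶ q.1, q.2 = FreeBasis.map x h p.2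

instance : IsPreorder (Σ z : C, FreeBasis x z) (Divides x) where
  refl p := ⟨𝟙 p.1, by rw [FreeBasis.map_id]; rfl⟩
  trans _ _ _ := fun ⟨h, hpq⟩ ⟨h', hqs⟩ => ⟨h ≫ h', by rw [hqs, hpq, FreeBasis.map_comp]; rfl⟩

theorem divides_partiallyWellOrderedOn (hW : MorphismsWellQuasiOrdered C) :
    (Set.univ : Set (Σ z : C, FreeBasis x z)).PartiallyWellOrderedOn (Divides x) := by
  have hcover : (Set.univ : Set (Σ z : C, FreeBasis x z)) =
      ⋃ i ∈ (Finset.univ : Finset (Fin r)),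
        (fun f : Σ z : C, (x i ⟶ z) => ⟨f.1, toLex ⟨i, f.2⟩⟩) '' Set.univ := by
    refine (Set.eq_univ_of_forall fun ⟨z, i, f⟩ => ?_).symm
    exact Set.mem_biUnion (Finset.mem_univ i) ⟨⟨z, f⟩, Set.mem_univ _, rfl⟩
  rw [hcover, Finset.partiallyWellOrderedOn_bUnion]
  refine fun i _ => (hW (x i)).image_of_monotone_on fun f _ g _ ⟨h, hfg⟩ => ⟨h, ?_⟩
  simp [FreeBasis.map, hfg]

variable (k) in
noncomputable def stableSpan (L : Set (Σ z : C, FreeBasis x z →₀ k)) (z : C) :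
    Submodule k (FreeBasis x z →₀ k) :=
  Submodule.span k {w | ∃ p ∈ L, ∃ h : p.1 ⟶ z, freeMap x k h p.2 = w}

theorem isStable_stableSpan (L : Set (Σ z : C, FreeBasis x z →₀ k)) :
    IsStable x k (stableSpan x k L) := by
  intro z z' h w hw
  refine Submodule.span_induction (fun _ ⟨p, hp, h₀, hw⟩ => ?_) ?_ (fun _ _ _ _ => ?_)
    (fun c _ _ => ?_) hw
  · exact Submodule.subset_span ⟨p, hp, h₀ ≫ h, by rw [freeMap_comp, hw]⟩
  · simp
  · simpa using add_mem
  · simpa using Submodule.smul_mem _ c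

theorem stableSpan_le {L : Set (Σ z : C, FreeBasis x z →₀ k)}
    {P : ∀ z : C, Submodule k (FreeBasis x z →₀ k)} (hP : IsStable x k P)
    (hL : ∀ p ∈ L, p.2 ∈ P p.1) : stableSpan x k L ≤ P := fun _ =>
  Submodule.span_le.2 fun _ ⟨p, hp, h, hw⟩ => hw ▸ hP h _ (hL p hp)

theorem mem_stableSpan {L : Set (Σ z : C, FreeBasis x z →₀ k)} {p : Σ z : C, FreeBasis x z →₀ k}
    (hp : p ∈ L) : p.2 ∈ stableSpan x k L p.1 :=
  Submodule.subset_span ⟨p, hp, 𝟙 _, freeMap_id x k _ _⟩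

variable [∀ x y : C, LinearOrder (x ⟶ y)] [∀ x y : C, WellFoundedLT (x ⟶ y)]

theorem wellFoundedGT_stable [IsNoetherianRing k] (hC : HomOrderCompatible C)
    (hW : MorphismsWellQuasiOrdered C) :
    WellFoundedGT {P : ∀ z : C, Submodule k (FreeBasis x z →₀ k) // IsStable x k P} := by
  rw [WellFoundedGT, isWellFounded_iff, RelEmbedding.wellFounded_iff_isEmpty]
  refine ⟨fun X => ?_⟩
  have hX : StrictMono fun t => (X t).1 := fun _ _ hst => X.map_rel_iff.2 hst
  have hstep : ∀ t, ∃ p : Σ z : C, FreeBasis x z,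
      ¬ leadIdeal x k (X (t + 1)).1 p.1 p.2 ≤ leadIdeal x k (X t).1 p.1 p.2 := by
    intro t
    by_contra! h
    exact (hX t.lt_succ_self).not_ge (le_of_leadIdeal_le (hX t.lt_succ_self).le fun z σ => h ⟨z, σ⟩)
  choose p hp using hstep
  have hJ : ∀ {s t}, s ≤ t → Divides x (p s) (p t) → ∀ s', s' ≤ t →
      leadIdeal x k (X s').1 (p s).1 (p s).2 ≤ leadIdeal x k (X t).1 (p t).1 (p t).2 := by
    rintro s t - ⟨h, hst⟩ s' hs't
    rw [hst]
    exact leadIdeal_mono_of_map hC (hX.monotone hs't) (X t).2 h _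
  obtain ⟨g, hg⟩ := (divides_partiallyWellOrderedOn x hW).exists_monotone_subseq
    (f := p) fun _ => Set.mem_univ _
  obtain ⟨n, hn⟩ := WellFoundedGT.monotone_chain_condition
    ⟨fun j => leadIdeal x k (X (g j)).1 (p (g j)).1 (p (g j)).2, fun i j hij =>
      hJ (g.monotone hij) (hg i j hij) _ (g.monotone hij)⟩
  refine hp (g n) ((hJ (g.monotone n.le_succ) (hg n (n + 1) n.le_succ) _
    (g.strictMono n.lt_succ_self)).trans (hn (n + 1) n.le_succ).ge)

theorem exists_finite_stableSpan_eq [IsNoetherianRing k] (hC : HomOrderCompatible C)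
    (hW : MorphismsWellQuasiOrdered C) {P : ∀ z : C, Submodule k (FreeBasis x z →₀ k)}
    (hP : IsStable x k P) :
    ∃ L : Set (Σ z : C, FreeBasis x z →₀ k), L.Finite ∧ (∀ p ∈ L, p.2 ∈ P p.1) ∧
      stableSpan x k L = P := by
  let S : Set {P : ∀ z : C, Submodule k (FreeBasis x z →₀ k) // IsStable x k P} :=
    {X | ∃ L : Set (Σ z : C, FreeBasis x z →₀ k), L.Finite ∧ (∀ p ∈ L, p.2 ∈ P p.1) ∧
      X.1 = stableSpan x k L}
  obtain ⟨⟨_, _⟩, ⟨L, hLfin, hLP, rfl⟩, hmax⟩ := (wellFoundedGT_stable x hC hW).wf.has_min S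
    ⟨⟨_, isStable_stableSpan x ∅⟩, ∅, Set.finite_empty, by simp, rfl⟩
  refine ⟨L, hLfin, hLP, le_antisymm (stableSpan_le x hP hLP) fun z w hw => ?_⟩
  by_contra hwL
  let L' := insert ⟨z, w⟩ L
  refine hmax ⟨_, isStable_stableSpan x L'⟩ ⟨L', hLfin.insert _, ?_, rfl⟩
    (lt_of_le_not_ge (fun z => Submodule.span_mono ?_) fun hle => hwL (hle z ?_))
  · simpa [L'] using ⟨hw, hLP⟩
  · exact fun _ ⟨q, hq, h, hw⟩ => ⟨q, Set.mem_insert_of_mem _ hq, h, hw⟩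
  · exact mem_stableSpan x (Set.mem_insert _ L)

end

section

variable {C : Type v} [Category.{w} C] {r : ℕ} (x : Fin r → C) {k : Type u} [CommRing k]
  (M : C ⥤ ModuleCat.{u} k) (m : ∀ i, M.obj (x i))

noncomputable def toModule (z : C) : (FreeBasis x z →₀ k) →ₗ[k] M.obj z :=
  Finsupp.linearCombination k fun σ => M.map (ofLex σ).2 (m (ofLex σ).1)

theorem toModule_freeMap {z z' : C} (h : z ⟶ z') (w : FreeBasis x z →₀ k) :
    toModule x M m z' (freeMap x k h w) = M.map h (toModule x M m z w) := by
  induction w using Finsupp.induction_linear with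
  | zero => simp
  | add f g hf hg => simp [hf, hg]
  | single σ c =>
    simp only [toModule, freeMap, Finsupp.lmapDomain_apply, Finsupp.mapDomain_single,
      Finsupp.linearCombination_single, map_smul, FreeBasis.map, ofLex_toLex, Functor.map_comp]
    rfl

theorem toModule_surjective
    (hspan : ∀ y : C, Submodule.span k {v | ∃ (i : Fin r) (f : x i ⟶ y), M.map f (m i) = v} = ⊤)
    (z : C) : Function.Surjective (toModule x M m z) := by
  rw [← LinearMap.range_eq_top, toModule, Finsupp.range_linearCombination, ← hspan z]
  congr 1
  ext v
  exact ⟨fun ⟨σ, hσ⟩ => ⟨_, _, hσ⟩, fun ⟨i, f, hf⟩ => ⟨toLex ⟨i, f⟩, hf⟩⟩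

end

end GrobnerBasis

open GrobnerBasis in
theorem locallyNoetherianModules_of_homOrder {C : Type v} [Category.{w} C]
    [∀ x y : C, LinearOrder (x ⟶ y)] [∀ x y : C, WellFoundedLT (x ⟶ y)]
    (hC : HomOrderCompatible C) (hW : MorphismsWellQuasiOrdered C)
    (k : Type u) [CommRing k] [IsNoetherianRing k] : LocallyNoetherianModules C k := by
  intro M N ι hι ⟨r, x, m, hspan⟩
  have hinj (z : C) : Function.Injective (ι.app z) :=
    (ModuleCat.mono_iff_injective _).1 ((NatTrans.mono_iff_mono_app ι).1 hι z)
  let P (z : C) : Submodule k (FreeBasis x z →₀ k) :=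
    (LinearMap.range (ι.app z).hom).comap (toModule x M m z)
  have hP : IsStable x k P := by
    rintro z z' h w ⟨v, hv⟩
    refine ⟨N.map h v, ?_⟩
    simp [toModule_freeMap, ← hv, NatTrans.naturality_apply]
  obtain ⟨L, hLfin, hLP, hL⟩ := exists_finite_stableSpan_eq x hC hW hP
  choose n hn using fun p : L => hLP p.1 p.2
  have := hLfin.to_subtype
  refine CatModule.fg_of_finite (fun p : L => p.1.1) n fun y => eq_top_iff.2 fun v _ => ?_
  obtain ⟨w, hw⟩ := toModule_surjective x M m hspan y (ι.app y v)
  have hwL : w ∈ stableSpan x k L y := hL ▸ ⟨v, hw.symm⟩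
  have hιv := Submodule.mem_map_of_mem (f := toModule x M m y) hwL
  rw [stableSpan, Submodule.map_span, hw] at hιv
  obtain ⟨v', hv', hvv'⟩ : ι.app y v ∈ (Submodule.span k
      {u | ∃ (p : L) (f : p.1.1 ⟶ y), N.map f (n p) = u}).map (ι.app y).hom := by
    rw [Submodule.map_span]
    refine Submodule.span_mono ?_ hιv
    rintro _ ⟨_, ⟨p, hp, h, rfl⟩, rfl⟩
    refine ⟨N.map h (n ⟨p, hp⟩), ⟨⟨p, hp⟩, h, rfl⟩, ?_⟩
    simpa [toModule_freeMap, NatTrans.naturality_apply] using congrArg (M.map h) (hn ⟨p, hp⟩)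
  exact hinj y hvv' ▸ hv'

section OVIMatrix

variable {R : Type u} [Ring R]

theorem isOVIHom_vecMulLinear {n m : ℕ} {A : Matrix (Fin n) (Fin m) R} (f : Fin n ↪o Fin m)
    (hpivot : ∀ i, A i (f i) = 1) (hzero : ∀ i j, f i < j → A i j = 0) :
    IsOVIHom (Matrix.vecMulLinear A) :=
  ⟨f, fun i => by simpa [Matrix.single_one_vecMul] using ⟨hpivot i, hzero i⟩⟩

theorem eq_vecMulLinear {n m : ℕ} (φ : (Fin n → R) →ₗ[R] (Fin m → R)) :
    φ = Matrix.vecMulLinear (Matrix.of fun i j => φ (Pi.single i 1) j) :=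
  LinearMap.ext fun v => funext fun j => linearMap_apply_eq_sum φ v j

instance [Finite R] (n m : OVI R) : Finite (n ⟶ m) :=
  Finite.of_injective (fun φ : {φ : (Fin n.len → R) →ₗ[R] (Fin m.len → R) // IsOVIHom φ} =>
    (φ.1 : (Fin n.len → R) → (Fin m.len → R))) fun _ _ h => Subtype.ext (DFunLike.coe_injective h)

end OVIMatrix

/-- A morphism of `OM R`: an `OVI(R)`-morphism (given by the matrix `A` whose `i`-th row is the
image of the `i`-th basis vector) together with a choice of the order embedding `f`, such that
`A` is in reduced echelon form with pivots at the columns `f i`. -/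
@[ext]
structure OMHom (R : Type u) [Ring R] (n m : ℕ) : Type u where
  f : Fin n ↪o Fin m
  A : Matrix (Fin n) (Fin m) R
  A_pivot : ∀ i i', A i (f i') = (1 : Matrix (Fin n) (Fin n) R) i i'
  A_eq_zero : ∀ i j, f i < j → A i j = 0

def OM (R : Type u) [Ring R] : Type := ℕ

namespace OM

variable {R : Type u} [Ring R]

@[reducible] def mk (R : Type u) [Ring R] (n : ℕ) : OM R := n

@[reducible] def len (n : OM R) : ℕ := n

theorem comp_A_pivot {n m p : ℕ} (φ : OMHom R n m) (ψ : OMHom R m p) (i : Fin n) (j : Fin m) :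
    (φ.A * ψ.A) i (ψ.f j) = φ.A i j := by
  rw [Matrix.mul_apply, Finset.sum_eq_single j
    (fun j' _ hj' => by rw [ψ.A_pivot, Matrix.one_apply_ne hj', mul_zero]) (by simp),
    ψ.A_pivot, Matrix.one_apply_eq, mul_one]

theorem comp_A_eq_zero {n m p : ℕ} (φ : OMHom R n m) (ψ : OMHom R m p) (i : Fin n) (t : Fin p)
    (ht : ψ.f (φ.f i) < t) : (φ.A * ψ.A) i t = 0 := by
  rw [Matrix.mul_apply]
  refine Finset.sum_eq_zero fun j _ => ?_
  rcases le_or_gt j (φ.f i) with h | h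
  · rw [ψ.A_eq_zero j t ((ψ.f.monotone h).trans_lt ht), mul_zero]
  · rw [φ.A_eq_zero i j h, zero_mul]

instance : Category (OM R) where
  Hom n m := OMHom R n.len m.len
  id _ := ⟨RelEmbedding.refl _, 1, fun _ _ => rfl, fun _ _ h => Matrix.one_apply_ne h.ne⟩
  comp φ ψ := ⟨φ.f.trans ψ.f, φ.A * ψ.A, fun i i' => (comp_A_pivot φ ψ i (φ.f i')).trans
    (φ.A_pivot i i'), fun i t ht => comp_A_eq_zero φ ψ i t ht⟩
  id_comp _ := OMHom.ext rfl (Matrix.one_mul _)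
  comp_id _ := OMHom.ext rfl (Matrix.mul_one _)
  assoc _ _ _ := OMHom.ext rfl (Matrix.mul_assoc _ _ _)

@[simp] theorem comp_A {n m p : OM R} (φ : n ⟶ m) (ψ : m ⟶ p) : (φ ≫ ψ).A = φ.A * ψ.A := rfl

variable (R) in
def toOVI : OM R ⥤ OVI R where
  obj n := OVI.mk R n.len
  map φ := ⟨Matrix.vecMulLinear φ.A, isOVIHom_vecMulLinear φ.f
    (fun i => (φ.A_pivot i i).trans (Matrix.one_apply_eq i)) φ.A_eq_zero⟩
  map_id _ := Subtype.ext (LinearMap.ext fun v => Matrix.vecMul_one v)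
  map_comp φ ψ := Subtype.ext (LinearMap.ext fun v => (Matrix.vecMul_vecMul v φ.A ψ.A).symm)

instance : (toOVI R).EssSurj := ⟨fun y => ⟨OM.mk R y.len, ⟨Iso.refl y⟩⟩⟩

theorem exists_factorization {y : OVI R} {z : OM R} (φ : y ⟶ (toOVI R).obj z) :
    ∃ (t : y ⟶ y) (g : OM.mk R y.len ⟶ z), φ = t ≫ (toOVI R).map g := by
  obtain ⟨fE, hfE⟩ : IsOVIHom (m := z.len) φ.1 := φ.2
  set A : Matrix (Fin y.len) (Fin z.len) R := Matrix.of fun i j => φ.1 (Pi.single i 1) j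
  -- the block of `A` at the pivot columns is lower unitriangular, and `φ = U ≫ (U⁻¹ * A)`
  set U := A.submatrix id fE
  have hUdiag (i : Fin y.len) : U i i = 1 := (hfE i).1
  have hUlow (i j : Fin y.len) (hij : i < j) : U i j = 0 := (hfE i).2 _ (fE.strictMono hij)
  obtain ⟨W, hWU, hUW, hW⟩ := Matrix.exists_lowerTriangular_inv hUdiag hUlow
  have hpivot (i i' : Fin y.len) : (W * A) i (fE i') = (1 : Matrix _ _ R) i i' :=
    congrFun (congrFun hWU i) i'
  have hzero (i : Fin y.len) (t : Fin z.len) (ht : fE i < t) : (W * A) i t = 0 := by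
    rw [Matrix.mul_apply]
    refine Finset.sum_eq_zero fun j _ => ?_
    rcases le_or_gt j i with h | h
    · rw [show A j t = 0 from (hfE j).2 t ((fE.monotone h).trans_lt ht), mul_zero]
    · rw [hW i j h, zero_mul]
  refine ⟨⟨Matrix.vecMulLinear U, isOVIHom_vecMulLinear (RelEmbedding.refl _) hUdiag hUlow⟩,
    ⟨fE, W * A, hpivot, hzero⟩, Subtype.ext (LinearMap.ext fun v => ?_)⟩
  change φ.1 v = Matrix.vecMul (Matrix.vecMul v U) (W * A)
  rw [Matrix.vecMul_vecMul, ← Matrix.mul_assoc, hUW, Matrix.one_mul]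
  exact LinearMap.congr_fun (eq_vecMulLinear φ.1) v

theorem propertyF_toOVI [Finite R] : PropertyF (toOVI R) := by
  intro y
  let e := Finite.equivFin (y ⟶ y)
  refine ⟨Nat.card (y ⟶ y), fun _ => OM.mk R y.len, fun i => e.symm i, fun z φ => ?_⟩
  obtain ⟨t, g, rfl⟩ := exists_factorization φ
  exact ⟨e t, g, congrArg (· ≫ (toOVI R).map g) (e.symm_apply_apply t).symm⟩

noncomputable def colKey {α : Type u} {n m : ℕ} (A : Matrix (Fin n) (Fin m) α) (j : Fin m) :
    Lex (Fin n → Ordinal.{u}) :=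
  toLex fun i => Ordinal.typein WellOrderingRel (A i j)

theorem colKey_eq_colKey_iff {α : Type u} {n m m' : ℕ} {A : Matrix (Fin n) (Fin m) α}
    {B : Matrix (Fin n) (Fin m') α} {j : Fin m} {j' : Fin m'} :
    colKey A j = colKey B j' ↔ ∀ i, A i j = B i j' := by
  simp [colKey, funext_iff]

/-- Morphisms are compared by their matrices, column by column from the last one, and then by
their order embeddings. -/
noncomputable def homKey {n m : ℕ} (φ : OMHom R n m) :
    Colex (Fin m → Lex (Fin n → Ordinal.{u})) ×ₗ Lex (Fin n → Fin m) :=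
  toLex (toColex (colKey φ.A), toLex ⇑φ.f)

theorem homKey_injective {n m : ℕ} : Function.Injective (homKey (R := R) (n := n) (m := m)) := by
  intro φ ψ h
  simp only [homKey, toLex_inj, Prod.mk.injEq, toColex_inj, funext_iff] at h
  exact OMHom.ext (DFunLike.coe_injective (funext h.2))
    (Matrix.ext fun i j => colKey_eq_colKey_iff.1 (h.1 j) i)

noncomputable instance (n m : OM R) : LinearOrder (n ⟶ m) :=
  LinearOrder.lift' homKey homKey_injective

instance (n m : OM R) : WellFoundedLT (n ⟶ m) :=
  ⟨InvImage.wf homKey wellFounded_lt⟩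

theorem colKey_comp_pivot {n m p : OM R} (φ : n ⟶ m) (h : m ⟶ p) (j : Fin m.len) :
    colKey (φ ≫ h).A (h.f j) = colKey φ.A j :=
  colKey_eq_colKey_iff.2 fun i => comp_A_pivot φ h i j

theorem colKey_comp_of_lt {n m p : OM R} {φ ψ : n ⟶ m} (h : m ⟶ p) {j : Fin m.len}
    (hφψ : ∀ j', j < j' → colKey φ.A j' = colKey ψ.A j') {t : Fin p.len} (ht : h.f j < t) :
    colKey (φ ≫ h).A t = colKey (ψ ≫ h).A t := by
  refine colKey_eq_colKey_iff.2 fun i => ?_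
  simp only [comp_A, Matrix.mul_apply]
  refine Finset.sum_congr rfl fun j' _ => ?_
  rcases le_or_gt j' j with hj' | hj'
  · rw [h.A_eq_zero j' t ((h.f.monotone hj').trans_lt ht), mul_zero, mul_zero]
  · rw [colKey_eq_colKey_iff.1 (hφψ j' hj') i]

theorem homOrderCompatible : HomOrderCompatible (OM R) := by
  intro n m p h φ ψ hφψ
  change homKey φ < homKey ψ at hφψ
  change homKey (φ ≫ h) < homKey (ψ ≫ h)
  rcases Prod.Lex.toLex_lt_toLex.1 hφψ with ⟨j, hj, hlt⟩ | ⟨hA, i, hi, hlt⟩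
  · refine Prod.Lex.toLex_lt_toLex.2 (.inl ⟨h.f j, fun t ht => ?_, ?_⟩)
    · exact colKey_comp_of_lt h hj ht
    · change colKey (φ ≫ h).A (h.f j) < colKey (ψ ≫ h).A (h.f j)
      rwa [colKey_comp_pivot, colKey_comp_pivot]
  · have hA' : φ.A = ψ.A := Matrix.ext fun i j =>
      colKey_eq_colKey_iff.1 (congrFun (toColex_inj.1 hA) j) i
    refine Prod.Lex.toLex_lt_toLex.2 (.inr ⟨by simp [hA'], i, fun i' hi' => ?_, ?_⟩)
    · exact congrArg h.f (hi i' hi')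
    · exact h.f.strictMono hlt

theorem skeletal : Skeletal (OM R) := fun n m ⟨e⟩ =>
  (le_antisymm (by simpa using Fintype.card_le_of_embedding e.hom.f.toEmbedding)
    (by simpa using Fintype.card_le_of_embedding e.inv.f.toEmbedding) : n.len = m.len)

open Function in
/-- The factor has pivots at the `g j`; outside them, its row `φ.f i` is the `i`-th row of `ψ`
and its other rows vanish. -/
theorem exists_comp_eq_of_columns {x y z : OM R} (φ : x ⟶ y) (ψ : x ⟶ z)
    (g : Fin y.len ↪o Fin z.len) (hpiv : ∀ j, partialInv ψ.f (g j) = partialInv φ.f j)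
    (hcol : ∀ i j, ψ.A i (g j) = φ.A i j) : ∃ h : y ⟶ z, ψ = φ ≫ h := by
  have hf (i : Fin x.len) : ψ.f i = g (φ.f i) :=
    (ψ.f.injective.isPartialInv i _).1 (by rw [hpiv, partialInv_left φ.f.injective])
  let B : Matrix (Fin y.len) (Fin z.len) R := fun j t =>
    (partialInv g t).elim ((partialInv φ.f j).elim 0 fun i => ψ.A i t)
      fun j' => (1 : Matrix _ _ R) j j'
  have hBpivot (j j' : Fin y.len) : B j (g j') = (1 : Matrix _ _ R) j j' := by
    simp [B, partialInv_left g.injective]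
  have hBzero (j : Fin y.len) (t : Fin z.len) (ht : g j < t) : B j t = 0 := by
    rcases hgt : partialInv g t with _ | j'
    · rcases hfj : partialInv φ.f j with _ | i
      · simp [B, hgt, hfj]
      · have := (φ.f.injective.isPartialInv i j).1 hfj
        simpa [B, hgt, hfj] using ψ.A_eq_zero i t (by rwa [hf, this])
    · have := (g.injective.isPartialInv j' t).1 hgt
      simpa [B, hgt] using Matrix.one_apply_ne (g.lt_iff_lt.1 (this ▸ ht)).ne
  refine ⟨⟨g, B, hBpivot, hBzero⟩, OMHom.ext (RelEmbedding.ext hf) (Matrix.ext fun i t => ?_)⟩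
  change ψ.A i t = (φ.A * B) i t
  rcases hgt : partialInv g t with _ | j
  · rw [Matrix.mul_apply, ← Fintype.sum_of_injective φ.f φ.f.injective
      (fun i' => φ.A i (φ.f i') * B (φ.f i') t) _ (fun j hj => ?_) fun _ => rfl]
    · simp [B, hgt, partialInv_left φ.f.injective, φ.A_pivot, ← Matrix.mul_apply]
    · have : partialInv φ.f j = none := Option.eq_none_iff_forall_ne_some.2 fun i hi =>
        hj ⟨i, (φ.f.injective.isPartialInv i j).1 hi⟩
      simp [B, hgt, this]
  · obtain rfl := (g.injective.isPartialInv j t).1 hgt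
    rw [hcol, Matrix.mul_apply, Finset.sum_eq_single j (fun j' _ hj' => by
      rw [hBpivot, Matrix.one_apply_ne hj', mul_zero]) (by simp), hBpivot, Matrix.one_apply_eq,
      mul_one]

/-- The columns of a morphism, each recorded with the index of the pivot it carries, if any. -/
noncomputable def word {x y : OM R} (φ : x ⟶ y) : List (Option (Fin x.len) × (Fin x.len → R)) :=
  List.ofFn fun j => (Function.partialInv φ.f j, fun i => φ.A i j)

theorem morphismsWellQuasiOrdered [Finite R] : MorphismsWellQuasiOrdered (OM R) := by
  intro x
  have hHigman := (Set.finite_univ (α := Option (Fin x.len) × (Fin x.len → R))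
    |>.partiallyWellOrderedOn (r := (· = ·))).partiallyWellOrderedOn_sublistForall₂
  refine Set.partiallyWellOrderedOn_iff_exists_lt.2 fun s _ => ?_
  obtain ⟨a, b, hab, hsub⟩ := hHigman.exists_lt (f := fun t => word (s t).2)
    fun _ _ _ => Set.mem_univ _
  obtain ⟨l, hl, hsub⟩ := List.sublistForall₂_iff.1 hsub
  rw [List.forall₂_eq_eq_eq] at hl
  subst hl
  obtain ⟨g, hg⟩ := List.exists_orderEmbedding_of_ofFn_sublist hsub
  exact ⟨a, b, hab, exists_comp_eq_of_columns _ _ g (fun j => congrArg Prod.fst (hg j))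
    fun i j => congrFun (congrArg Prod.snd (hg j)) i⟩

end OM

/-- Let `R` be a finite ring.  Then the category `OVI(R)` is quasi-Gröbner; in
particular, for every noetherian commutative ring `k`, the category of `OVI(R)`-modules
over `k` is locally noetherian. -/
theorem ovi_isQuasiGrobner_of_finite (R : Type u) [Ring R] [Finite R] :
    IsQuasiGrobner (OVI R) ∧
      ∀ (k : Type u) [CommRing k], IsNoetherianRing k →
        OVIModulesLocallyNoetherian R k := by
  have hgrobner : IsGrobner (OM R) :=
    isGrobner_of_skeletal OM.skeletal OM.homOrderCompatible OM.morphismsWellQuasiOrdered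
  have hsurj : (OM.toOVI R).EssSurj := inferInstance
  refine ⟨⟨Cat.of (OM R), OM.toOVI R, hgrobner, hsurj, OM.propertyF_toOVI⟩, fun k _ _ => ?_⟩
  exact (locallyNoetherianModules_of_homOrder OM.homOrderCompatible
    OM.morphismsWellQuasiOrdered k).of_propertyF (OM.toOVI R) OM.propertyF_toOVI
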